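/- arXiv:2205.02477 — 14 statements merged into one kernel-verified Lean document; each statement's English description precedes it below -/
import Mathlib

section
/- Let f be a set-ordered graceful labeling of a connected bipartite graph G with bipartition (X,Y) and q edges. Define a total labeling f*_dual by f*_dual(w) = q − f(w) for each vertex w and f*_dual(xy) = q + 1 − f(xy) for each edge xy, where f(xy) = |f(x) − f(y)|. Then the edge colors {f*_dual(xy) : xy ∈ E(G)} form exactly the set {1,2,…,q}, and for every edge xy one has f*_dual(xy) + |f*_dual(x) − f*_dual(y)| = q + 1; that is, f*_dual is a set-ordered edge-difference total labeling of G with magic constant q + 1. -/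
/-- The total dual labeling `f*_dual`, given by `f*_dual(w) = q - f(w)` on
vertices and `f*_dual(xy) = q + 1 - f(xy)` on edges (where `f(xy) = |f(x) - f(y)|`), of a
set-ordered graceful labeling `f` of a connected bipartite graph `G` with `q` edges is a
set-ordered edge-difference total labeling of `G` with magic constant `q + 1`: its edge
colors form exactly `{1, …, q}` and `f*_dual(xy) + |f*_dual(x) - f*_dual(y)| = q + 1` for
every edge `xy`. -/
theorem dual_of_set_ordered_graceful_is_edge_difference
    {V : Type*} [Fintype V] [DecidableEq V]
    (G : SimpleGraph V) [DecidableRel G.Adj]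
    (hconn : G.Connected)
    (X Y : Finset V) (hXne : X.Nonempty) (hYne : Y.Nonempty)
    (hdisj : Disjoint X Y) (hcover : X ∪ Y = Finset.univ)
    (hbip : ∀ u v, G.Adj u v → (u ∈ X ∧ v ∈ Y) ∨ (u ∈ Y ∧ v ∈ X))
    (q : ℕ) (hq : q = G.edgeFinset.card) (hq1 : 1 ≤ q)
    (f : V → ℕ) (hinj : Function.Injective f) (hbd : ∀ v, f v ≤ q)
    (hedges : {n : ℕ | ∃ u v, G.Adj u v ∧ n = Nat.dist (f u) (f v)} = Set.Icc 1 q)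
    (hso : ∀ x ∈ X, ∀ y ∈ Y, f x < f y) :
    Function.Injective (fun w => q - f w) ∧
    {n : ℕ | ∃ u v, G.Adj u v ∧ n = q + 1 - Nat.dist (f u) (f v)} = Set.Icc 1 q ∧
    (∀ u v, G.Adj u v →
      (q + 1 - Nat.dist (f u) (f v)) + Nat.dist (q - f u) (q - f v) = q + 1) := by

  have hd : ∀ u v, G.Adj u v → 1 ≤ Nat.dist (f u) (f v) ∧ Nat.dist (f u) (f v) ≤ q := by
    intro u v huv
    have : Nat.dist (f u) (f v) ∈ Set.Icc 1 q := by
      rw [← hedges]; exact ⟨u, v, huv, rfl⟩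
    exact this
  refine ⟨?_, ?_, ?_⟩
  · intro a b hab
    have ha := hbd a; have hb := hbd b
    simp only at hab
    exact hinj (by omega)
  · ext n
    simp only [Set.mem_setOf_eq, Set.mem_Icc]
    constructor
    · rintro ⟨u, v, huv, rfl⟩
      have := hd u v huv; omega
    · rintro ⟨h1, h2⟩
      have : q + 1 - n ∈ Set.Icc 1 q := by constructor <;> omega
      rw [← hedges] at this
      obtain ⟨u, v, huv, hh⟩ := this
      exact ⟨u, v, huv, by omega⟩
  · intro u v huv
    have := hd u v huv
    have hu := hbd u; have hv := hbd v
    simp only [Nat.dist] at *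
    omega
end

section
/- Let f be a set-ordered graceful labeling of a connected bipartite graph G with bipartition (X,Y) and q edges. Define the XY-set-dual labeling g by g(x) = max f(X) + min f(X) − f(x) for x ∈ X and g(y) = max f(Y) + min f(Y) − f(y) for y ∈ Y. Then for every edge xy the induced label satisfies |g(x) − g(y)| = q + min f(Y) − max f(X) − f(xy), so the induced edge labels form exactly the integer interval from min f(Y) − max f(X) to min f(Y) − max f(X) + q − 1; in particular, if min f(Y) − max f(X) = 1, then g is a set-ordered graceful labeling of G. -/
/-- The XY-set-dual labeling `g`, defined by
`g(x) = max f(X) + min f(X) - f(x)` for `x ∈ X` and `g(y) = max f(Y) + min f(Y) - f(y)`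
for `y ∈ Y`, of a set-ordered graceful labeling `f` of a connected bipartite graph `G`
with `q` edges satisfies `|g(x) - g(y)| = q + min f(Y) - max f(X) - f(xy)` on every edge,
so the induced edge labels form exactly the interval
`[min f(Y) - max f(X), min f(Y) - max f(X) + q - 1]`; in particular, when
`min f(Y) - max f(X) = 1`, `g` is a set-ordered graceful labeling of `G`. -/
theorem XY_set_dual_of_set_ordered_graceful
    {V : Type*} [Fintype V] [DecidableEq V]
    (G : SimpleGraph V) [DecidableRel G.Adj]
    (hconn : G.Connected)
    (X Y : Finset V) (hXne : X.Nonempty) (hYne : Y.Nonempty)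
    (hdisj : Disjoint X Y) (hcover : X ∪ Y = Finset.univ)
    (hbip : ∀ u v, G.Adj u v → (u ∈ X ∧ v ∈ Y) ∨ (u ∈ Y ∧ v ∈ X))
    (q : ℕ) (hq : q = G.edgeFinset.card) (hq1 : 1 ≤ q)
    (f : V → ℕ) (hinj : Function.Injective f) (hbd : ∀ v, f v ≤ q)
    (hedges : {n : ℕ | ∃ u v, G.Adj u v ∧ n = Nat.dist (f u) (f v)} = Set.Icc 1 q)
    (hso : ∀ x ∈ X, ∀ y ∈ Y, f x < f y) :
    let mX := X.sup' hXne f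
    let nX := X.inf' hXne f
    let mY := Y.sup' hYne f
    let nY := Y.inf' hYne f
    let g : V → ℕ := fun v => if v ∈ X then mX + nX - f v else mY + nY - f v
    (∀ u v, G.Adj u v → u ∈ X → v ∈ Y →
        Nat.dist (g u) (g v) = q + nY - mX - Nat.dist (f u) (f v)) ∧
    {n : ℕ | ∃ u v, G.Adj u v ∧ n = Nat.dist (g u) (g v)}
        = Set.Icc (nY - mX) (nY - mX + q - 1) ∧
    (nY - mX = 1 →
      Function.Injective g ∧ (∀ v, g v ≤ q) ∧
      {n : ℕ | ∃ u v, G.Adj u v ∧ n = Nat.dist (g u) (g v)} = Set.Icc 1 q ∧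
      ∀ x ∈ X, ∀ y ∈ Y, g x < g y) := by
  intro mX nX mY nY g
  obtain ⟨x₀, hx₀, hx₀e⟩ := X.exists_mem_eq_sup' hXne f
  obtain ⟨y₀, hy₀, hy₀e⟩ := Y.exists_mem_eq_inf' hYne f
  have hx₀e' : mX = f x₀ := hx₀e
  have hy₀e' : nY = f y₀ := hy₀e
  have hmXlt : mX < nY := by have := hso _ hx₀ _ hy₀; omega
  have hfleX : ∀ x ∈ X, f x ≤ mX := fun x hx => Finset.le_sup' f hx
  have hnYle : ∀ y ∈ Y, nY ≤ f y := fun y hy => Finset.inf'_le f hy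
  have hmXq : mX ≤ q := by have := hbd x₀; omega
  have hqmem : q ∈ {n : ℕ | ∃ u v, G.Adj u v ∧ n = Nat.dist (f u) (f v)} := by
    rw [hedges]; exact ⟨hq1, le_refl q⟩
  obtain ⟨u₀, v₀, hadj₀, hd₀⟩ := hqmem
  have hexq : (∃ x ∈ X, f x = 0) ∧ (∃ y ∈ Y, f y = q) := by
    rcases hbip u₀ v₀ hadj₀ with ⟨hu, hv⟩ | ⟨hu, hv⟩
    · have h1 := hso _ hu _ hv
      have h2 := hbd v₀
      simp only [Nat.dist] at hd₀
      exact ⟨⟨u₀, hu, by omega⟩, ⟨v₀, hv, by omega⟩⟩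
    · have h1 := hso _ hv _ hu
      have h2 := hbd u₀
      simp only [Nat.dist] at hd₀
      exact ⟨⟨v₀, hv, by omega⟩, ⟨u₀, hu, by omega⟩⟩
  have hnX0 : nX = 0 := by
    obtain ⟨x, hx, hfx⟩ := hexq.1
    have h : nX ≤ f x := Finset.inf'_le f hx
    omega
  have hmYq : mY = q := by
    obtain ⟨y, hy, hfy⟩ := hexq.2
    have h : f y ≤ mY := Finset.le_sup' f hy
    obtain ⟨y₁, hy₁, hy₁e⟩ := Y.exists_mem_eq_sup' hYne f
    have := hbd y₁
    omega
  have hgX : ∀ v ∈ X, g v = mX - f v := by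
    intro v hv
    show (if v ∈ X then mX + nX - f v else mY + nY - f v) = mX - f v
    rw [if_pos hv, hnX0]
    omega
  have hgY : ∀ v ∈ Y, g v = q + nY - f v := by
    intro v hv
    have hvX : v ∉ X := fun h => Finset.disjoint_left.mp hdisj h hv
    show (if v ∈ X then mX + nX - f v else mY + nY - f v) = q + nY - f v
    rw [if_neg hvX, hmYq]
  have key : ∀ u v, G.Adj u v → u ∈ X → v ∈ Y →
      Nat.dist (g u) (g v) = q + nY - mX - Nat.dist (f u) (f v) := by
    intro u v hadj hu hv
    rw [hgX u hu, hgY v hv]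
    have h1 := hfleX u hu
    have h2 := hnYle v hv
    have h3 := hbd v
    have h4 := hso u hu v hv
    simp only [Nat.dist]
    omega
  have hset : {n : ℕ | ∃ u v, G.Adj u v ∧ n = Nat.dist (g u) (g v)}
      = Set.Icc (nY - mX) (nY - mX + q - 1) := by
    ext n
    simp only [Set.mem_setOf_eq, Set.mem_Icc]
    constructor
    · rintro ⟨u, v, hadj, rfl⟩
      rcases hbip u v hadj with ⟨hu, hv⟩ | ⟨hu, hv⟩
      · have he : Nat.dist (f u) (f v) ∈ Set.Icc 1 q := by
          rw [← hedges]; exact ⟨u, v, hadj, rfl⟩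
        rw [key u v hadj hu hv]
        simp only [Set.mem_Icc] at he
        omega
      · have he : Nat.dist (f v) (f u) ∈ Set.Icc 1 q := by
          rw [← hedges]; exact ⟨v, u, hadj.symm, rfl⟩
        rw [Nat.dist_comm, key v u hadj.symm hv hu]
        simp only [Set.mem_Icc] at he
        omega
    · rintro ⟨hl, hr⟩
      have he : (q + nY - mX - n) ∈ Set.Icc 1 q := by
        simp only [Set.mem_Icc]; omega
      rw [← hedges] at he
      obtain ⟨u, v, hadj, hd⟩ := he
      rcases hbip u v hadj with ⟨hu, hv⟩ | ⟨hu, hv⟩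
      · exact ⟨u, v, hadj, by rw [key u v hadj hu hv, ← hd]; omega⟩
      · exact ⟨v, u, hadj.symm, by
          rw [key v u hadj.symm hv hu, Nat.dist_comm (f v), ← hd]; omega⟩
  refine ⟨key, hset, fun h1 => ?_⟩
  have hcase : ∀ v : V, v ∈ X ∨ v ∈ Y := by
    intro v
    have hv : v ∈ X ∪ Y := by rw [hcover]; exact Finset.mem_univ v
    exact Finset.mem_union.mp hv
  refine ⟨?_, ?_, ?_, ?_⟩
  · intro a b hab
    rcases hcase a with ha | ha <;> rcases hcase b with hb | hb
    · rw [hgX a ha, hgX b hb] at hab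
      have h2 := hfleX a ha
      have h3 := hfleX b hb
      exact hinj (by omega)
    · rw [hgX a ha, hgY b hb] at hab
      have h2 := hfleX a ha
      have h3 := hbd b
      have h4 := hnYle b hb
      exfalso; omega
    · rw [hgY a ha, hgX b hb] at hab
      have h2 := hfleX b hb
      have h3 := hbd a
      have h4 := hnYle a ha
      exfalso; omega
    · rw [hgY a ha, hgY b hb] at hab
      have h2 := hbd a
      have h3 := hbd b
      have h4 := hnYle a ha
      have h5 := hnYle b hb
      exact hinj (by omega)
  · intro v
    rcases hcase v with hv | hv
    · rw [hgX v hv]; omega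
    · rw [hgY v hv]; have := hnYle v hv; omega
  · rw [hset, h1]
    have h2 : 1 + q - 1 = q := by omega
    rw [h2]
  · intro x hx y hy
    rw [hgX x hx, hgY y hy]
    have h2 := hfleX x hx
    have h3 := hbd y
    have h4 := hnYle y hy
    omega
end

section
/- Let f be a set-ordered graceful labeling of a connected bipartite graph G with bipartition (X,Y) and q edges. Define a total labeling g* by g*(x) = max f(X) − f(x) for x ∈ X, g*(y) = q + min f(Y) − f(y) for y ∈ Y, and g*(xy) = q + 1 − f(xy) for each edge xy, where f(xy) = |f(x) − f(y)|. Then g* is injective on vertices with max g*(X) < min g*(Y), the edge colors {g*(xy) : xy ∈ E(G)} form exactly {1,2,…,q}, and for every edge xy one has ||g*(x) − g*(y)| − g*(xy)| = min f(Y) − max f(X) − 1; that is, g* is a set-ordered graceful-difference total labeling of G. -/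
/-- The total labeling `g*` given by `g*(x) = max f(X) - f(x)` on `X`,
`g*(y) = q + min f(Y) - f(y)` on `Y` and `g*(xy) = q + 1 - f(xy)` on edges, built from a
set-ordered graceful labeling `f` of a connected bipartite graph `G` with `q` edges, is a
set-ordered graceful-difference total labeling of `G`: `g*` is injective on vertices with
`max g*(X) < min g*(Y)`, its edge colors form exactly `{1, …, q}`, and
`||g*(x) - g*(y)| - g*(xy)| = min f(Y) - max f(X) - 1` for every edge `xy`. -/
theorem XY_set_dual_star_is_graceful_difference
    {V : Type*} [Fintype V] [DecidableEq V]
    (G : SimpleGraph V) [DecidableRel G.Adj]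
    (hconn : G.Connected)
    (X Y : Finset V) (hXne : X.Nonempty) (hYne : Y.Nonempty)
    (hdisj : Disjoint X Y) (hcover : X ∪ Y = Finset.univ)
    (hbip : ∀ u v, G.Adj u v → (u ∈ X ∧ v ∈ Y) ∨ (u ∈ Y ∧ v ∈ X))
    (q : ℕ) (hq : q = G.edgeFinset.card) (hq1 : 1 ≤ q)
    (f : V → ℕ) (hinj : Function.Injective f) (hbd : ∀ v, f v ≤ q)
    (hedges : {n : ℕ | ∃ u v, G.Adj u v ∧ n = Nat.dist (f u) (f v)} = Set.Icc 1 q)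
    (hso : ∀ x ∈ X, ∀ y ∈ Y, f x < f y) :
    let mX := X.sup' hXne f
    let nY := Y.inf' hYne f
    let g : V → ℕ := fun v => if v ∈ X then mX - f v else q + nY - f v
    Function.Injective g ∧
    (∀ x ∈ X, ∀ y ∈ Y, g x < g y) ∧
    {n : ℕ | ∃ u v, G.Adj u v ∧ n = q + 1 - Nat.dist (f u) (f v)} = Set.Icc 1 q ∧
    (∀ u v, G.Adj u v →
      Nat.dist (Nat.dist (g u) (g v)) (q + 1 - Nat.dist (f u) (f v)) = nY - mX - 1) := by
  intro mX nY g
  obtain ⟨x0, hx0, hx0e⟩ := Finset.exists_mem_eq_sup' hXne f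
  obtain ⟨y0, hy0, hy0e⟩ := Finset.exists_mem_eq_inf' hYne f
  have hmn : mX < nY := by
    rw [show mX = f x0 from hx0e, show nY = f y0 from hy0e]
    exact hso x0 hx0 y0 hy0
  have hXle : ∀ x ∈ X, f x ≤ mX := fun x hx => Finset.le_sup' f hx
  have hYge : ∀ y ∈ Y, nY ≤ f y := fun y hy => Finset.inf'_le f hy
  have hmem : ∀ v : V, v ∈ X ∨ v ∈ Y := by
    intro v
    have : v ∈ X ∪ Y := hcover ▸ Finset.mem_univ v
    exact Finset.mem_union.mp this
  have hnotboth : ∀ v : V, v ∈ X → v ∉ Y := fun v hv =>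
    Finset.disjoint_left.mp hdisj hv
  have hgX : ∀ x ∈ X, g x = mX - f x := by
    intro x hx; simp only [g, if_pos hx]
  have hgY : ∀ y ∈ Y, g y = q + nY - f y := by
    intro y hy
    have : y ∉ X := fun h => hnotboth y h hy
    simp only [g, if_neg this]
  have hord : ∀ x ∈ X, ∀ y ∈ Y, g x < g y := by
    intro x hx y hy
    rw [hgX x hx, hgY y hy]
    have h1 := hXle x hx
    have h2 := hYge y hy
    have h3 := hbd y
    omega
  refine ⟨?_, hord, ?_, ?_⟩
  · intro u v huv
    rcases hmem u with hu | hu <;> rcases hmem v with hv | hv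
    · apply hinj
      rw [hgX u hu, hgX v hv] at huv
      have h1 := hXle u hu
      have h2 := hXle v hv
      omega
    · exact absurd huv (Nat.ne_of_lt (hord u hu v hv))
    · exact absurd huv.symm (Nat.ne_of_lt (hord v hv u hu))
    · apply hinj
      rw [hgY u hu, hgY v hv] at huv
      have h1 := hbd u
      have h2 := hbd v
      omega
  · ext n
    simp only [Set.mem_setOf_eq, Set.mem_Icc]
    constructor
    · rintro ⟨u, v, ha, hn⟩
      have hd : Nat.dist (f u) (f v) ∈ Set.Icc 1 q := hedges ▸ ⟨u, v, ha, rfl⟩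
      rw [Set.mem_Icc] at hd
      omega
    · rintro ⟨h1, h2⟩
      have : (q + 1 - n) ∈ {n : ℕ | ∃ u v, G.Adj u v ∧ n = Nat.dist (f u) (f v)} := by
        rw [hedges, Set.mem_Icc]; omega
      obtain ⟨u, v, ha, hd⟩ := this
      exact ⟨u, v, ha, by omega⟩
  · intro u v ha
    have hd : Nat.dist (f u) (f v) ∈ Set.Icc 1 q := hedges ▸ ⟨u, v, ha, rfl⟩
    rw [Set.mem_Icc] at hd
    rcases hbip u v ha with ⟨hu, hv⟩ | ⟨hu, hv⟩
    · have hlt := hso u hu v hv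
      have h1 := hXle u hu
      have h2 := hYge v hv
      have h3 := hbd v
      rw [hgX u hu, hgY v hv]
      simp only [Nat.dist] at *
      omega
    · have hlt := hso v hv u hu
      have h1 := hXle v hv
      have h2 := hYge u hu
      have h3 := hbd u
      rw [hgX v hv, hgY u hu]
      simp only [Nat.dist] at *
      omega
end

section
/- Let f be a set-ordered graceful labeling of a connected bipartite graph G with bipartition (X,Y) and q edges. Define the X-set-dual labeling h by h(x) = max f(X) − f(x) for x ∈ X, h(y) = f(y) for y ∈ Y, and h(xy) = f(xy) for each edge xy, where f(xy) = |f(x) − f(y)|. Then the edge colors of h form exactly {1,2,…,q}, max h(X) < min h(Y), and for every edge xy one has h(x) + h(y) − h(xy) = max f(X); that is, h is a set-ordered felicitous-difference total labeling of G with constant max f(X). -/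
/-- The X-set-dual labeling `h`, given by `h(x) = max f(X) - f(x)` on `X`,
`h(y) = f(y)` on `Y` and `h(xy) = f(xy) = |f(x) - f(y)|` on edges, built from a
set-ordered graceful labeling `f` of a connected bipartite graph `G` with `q` edges, is a
set-ordered felicitous-difference total labeling of `G` with constant `max f(X)`: its
edge colors form exactly `{1, …, q}`, `max h(X) < min h(Y)`, and
`h(x) + h(y) - h(xy) = max f(X)` for every edge `xy`. -/
theorem X_set_dual_is_felicitous_difference
    {V : Type*} [Fintype V] [DecidableEq V]
    (G : SimpleGraph V) [DecidableRel G.Adj]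
    (hconn : G.Connected)
    (X Y : Finset V) (hXne : X.Nonempty) (hYne : Y.Nonempty)
    (hdisj : Disjoint X Y) (hcover : X ∪ Y = Finset.univ)
    (hbip : ∀ u v, G.Adj u v → (u ∈ X ∧ v ∈ Y) ∨ (u ∈ Y ∧ v ∈ X))
    (q : ℕ) (hq : q = G.edgeFinset.card) (hq1 : 1 ≤ q)
    (f : V → ℕ) (hinj : Function.Injective f) (hbd : ∀ v, f v ≤ q)
    (hedges : {n : ℕ | ∃ u v, G.Adj u v ∧ n = Nat.dist (f u) (f v)} = Set.Icc 1 q)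
    (hso : ∀ x ∈ X, ∀ y ∈ Y, f x < f y) :
    let mX := X.sup' hXne f
    let h : V → ℕ := fun v => if v ∈ X then mX - f v else f v
    {n : ℕ | ∃ u v, G.Adj u v ∧ n = Nat.dist (f u) (f v)} = Set.Icc 1 q ∧
    (∀ x ∈ X, ∀ y ∈ Y, h x < h y) ∧
    (∀ u v, G.Adj u v →
      (h u : ℤ) + (h v : ℤ) - (Nat.dist (f u) (f v) : ℤ) = (mX : ℤ)) := by
  intro mX h
  have hmX : ∃ x0 ∈ X, mX = f x0 := by
    obtain ⟨x0, hx0, hfx0⟩ := X.exists_mem_eq_sup' hXne f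
    exact ⟨x0, hx0, hfx0⟩
  obtain ⟨x0, hx0X, hmX0⟩ := hmX
  have key : ∀ u v, G.Adj u v → u ∈ X → v ∈ Y →
      (h u : ℤ) + (h v : ℤ) - (Nat.dist (f u) (f v) : ℤ) = (mX : ℤ) := by
    intro u v huv hu hv
    have hvX : v ∉ X := fun hvX => (hdisj.forall_ne_finset hvX hv) rfl
    have hlt : f u < f v := hso u hu v hv
    have hle : f u ≤ mX := Finset.le_sup' f hu
    have hdist : Nat.dist (f u) (f v) = f v - f u := Nat.dist_eq_sub_of_le hlt.le
    simp only [h, if_pos hu, if_neg hvX, hdist]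
    push_cast [Nat.sub_le_iff_le_add.mpr, hle, hlt.le]
    ring
  refine ⟨hedges, ?_, ?_⟩
  · intro x hx y hy
    have hyX : y ∉ X := fun h' => (hdisj.forall_ne_finset h' hy) rfl
    simp only [h, if_pos hx, if_neg hyX]
    calc mX - f x ≤ mX := Nat.sub_le _ _
      _ = f x0 := hmX0
      _ < f y := hso x0 hx0X y hy
  · intro u v huv
    rcases hbip u v huv with ⟨hu, hv⟩ | ⟨hu, hv⟩
    · exact key u v huv hu hv
    · have := key v u huv.symm hv hu
      rw [Nat.dist_comm] at this
      linarith
end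

section
/- Let f be a set-ordered graceful labeling of a connected bipartite graph G with bipartition (X,Y) and q edges. Define a total labeling h* by h*(x) = max f(X) − f(x) for x ∈ X, h*(y) = f(y) for y ∈ Y, and h*(xy) = q + 1 − f(xy) for each edge xy, where f(xy) = |f(x) − f(y)|. Then the edge colors of h* form exactly {1,2,…,q} and for every edge xy one has h*(x) + h*(xy) + h*(y) = q + 1 + max f(X); that is, h* is a set-ordered edge-magic total labeling of G with magic constant q + 1 + max f(X). -/
/-- The total labeling `h*`, given by `h*(x) = max f(X) - f(x)` on `X`,
`h*(y) = f(y)` on `Y` and `h*(xy) = q + 1 - f(xy)` on edges, built from a set-ordered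
graceful labeling `f` of a connected bipartite graph `G` with `q` edges, is a set-ordered
edge-magic total labeling of `G` with magic constant `q + 1 + max f(X)`: its edge colors
form exactly `{1, …, q}` and `h*(x) + h*(xy) + h*(y) = q + 1 + max f(X)` for every edge
`xy`. -/
theorem X_set_dual_star_is_edge_magic
    {V : Type*} [Fintype V] [DecidableEq V]
    (G : SimpleGraph V) [DecidableRel G.Adj]
    (hconn : G.Connected)
    (X Y : Finset V) (hXne : X.Nonempty) (hYne : Y.Nonempty)
    (hdisj : Disjoint X Y) (hcover : X ∪ Y = Finset.univ)
    (hbip : ∀ u v, G.Adj u v → (u ∈ X ∧ v ∈ Y) ∨ (u ∈ Y ∧ v ∈ X))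
    (q : ℕ) (hq : q = G.edgeFinset.card) (hq1 : 1 ≤ q)
    (f : V → ℕ) (hinj : Function.Injective f) (hbd : ∀ v, f v ≤ q)
    (hedges : {n : ℕ | ∃ u v, G.Adj u v ∧ n = Nat.dist (f u) (f v)} = Set.Icc 1 q)
    (hso : ∀ x ∈ X, ∀ y ∈ Y, f x < f y) :
    let mX := X.sup' hXne f
    let h : V → ℕ := fun v => if v ∈ X then mX - f v else f v
    {n : ℕ | ∃ u v, G.Adj u v ∧ n = q + 1 - Nat.dist (f u) (f v)} = Set.Icc 1 q ∧
    (∀ u v, G.Adj u v →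
      h u + (q + 1 - Nat.dist (f u) (f v)) + h v = q + 1 + mX) := by
  intro mX h
  have hdist : ∀ u v, G.Adj u v → 1 ≤ Nat.dist (f u) (f v) ∧ Nat.dist (f u) (f v) ≤ q := by
    intro u v huv
    have : Nat.dist (f u) (f v) ∈ Set.Icc 1 q := by
      rw [← hedges]; exact ⟨u, v, huv, rfl⟩
    exact this
  constructor
  · ext n
    simp only [Set.mem_setOf_eq, Set.mem_Icc]
    constructor
    · rintro ⟨u, v, huv, rfl⟩
      have := hdist u v huv
      omega
    · rintro ⟨h1, h2⟩
      have : q + 1 - n ∈ Set.Icc 1 q := by simp [Set.mem_Icc]; omega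
      rw [← hedges] at this
      obtain ⟨u, v, huv, hd⟩ := this
      exact ⟨u, v, huv, by omega⟩
  · intro u v huv
    have hd := hdist u v huv
    -- wlog via cases
    have key : ∀ x y, G.Adj x y → x ∈ X → y ∈ Y →
        h x + (q + 1 - Nat.dist (f x) (f y)) + h y = q + 1 + mX := by
      intro x y hxy hx hy
      have hlt : f x < f y := hso x hx y hy
      have hxle : f x ≤ mX := Finset.le_sup' f hx
      have hyq : f y ≤ q := hbd y
      have hdxy := hdist x y hxy
      have hynX : y ∉ X := fun hyX => (Finset.disjoint_left.mp hdisj hyX) hy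
      have hdval : Nat.dist (f x) (f y) = f y - f x := Nat.dist_eq_sub_of_le hlt.le
      simp only [h, if_pos hx, if_neg hynX]
      omega
    rcases hbip u v huv with ⟨hu, hv⟩ | ⟨hu, hv⟩
    · exact key u v huv hu hv
    · have := key v u huv.symm hv hu
      rw [Nat.dist_comm (f v) (f u)] at this
      omega
end

section
/- Let f be a set-ordered graceful labeling of a connected bipartite graph G with bipartition (X,Y) and q edges. Define the Y-set-dual labeling h by h(x) = f(x) for x ∈ X, h(y) = q + min f(Y) − f(y) for y ∈ Y, and h(xy) = f(xy) for each edge xy, where f(xy) = |f(x) − f(y)|. Then the edge colors of h form exactly {1,2,…,q} and for every edge xy one has h(x) + h(xy) + h(y) = q + min f(Y); that is, h is an edge-magic total labeling of G with magic constant q + min f(Y). -/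
/-- The Y-set-dual labeling `h`, given by `h(x) = f(x)` on `X`,
`h(y) = q + min f(Y) - f(y)` on `Y` and `h(xy) = f(xy) = |f(x) - f(y)|` on edges, built
from a set-ordered graceful labeling `f` of a connected bipartite graph `G` with `q`
edges, is an edge-magic total labeling of `G` with magic constant `q + min f(Y)`: its
edge colors form exactly `{1, …, q}` and `h(x) + h(xy) + h(y) = q + min f(Y)` for every
edge `xy`. -/
theorem Y_set_dual_is_edge_magic
    {V : Type*} [Fintype V] [DecidableEq V]
    (G : SimpleGraph V) [DecidableRel G.Adj]
    (hconn : G.Connected)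
    (X Y : Finset V) (hXne : X.Nonempty) (hYne : Y.Nonempty)
    (hdisj : Disjoint X Y) (hcover : X ∪ Y = Finset.univ)
    (hbip : ∀ u v, G.Adj u v → (u ∈ X ∧ v ∈ Y) ∨ (u ∈ Y ∧ v ∈ X))
    (q : ℕ) (hq : q = G.edgeFinset.card) (hq1 : 1 ≤ q)
    (f : V → ℕ) (hinj : Function.Injective f) (hbd : ∀ v, f v ≤ q)
    (hedges : {n : ℕ | ∃ u v, G.Adj u v ∧ n = Nat.dist (f u) (f v)} = Set.Icc 1 q)
    (hso : ∀ x ∈ X, ∀ y ∈ Y, f x < f y) :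
    let nY := Y.inf' hYne f
    let h : V → ℕ := fun v => if v ∈ X then f v else q + nY - f v
    {n : ℕ | ∃ u v, G.Adj u v ∧ n = Nat.dist (f u) (f v)} = Set.Icc 1 q ∧
    (∀ u v, G.Adj u v →
      h u + Nat.dist (f u) (f v) + h v = q + nY) := by
  intro nY h
  refine ⟨hedges, fun u v huv => ?_⟩
  have key : ∀ x ∈ X, ∀ y ∈ Y, h x + Nat.dist (f x) (f y) + h y = q + nY := by
    intro x hx y hy
    have hxy : f x < f y := hso x hx y hy
    have hyX : y ∉ X := fun hyX => (Finset.disjoint_left.mp hdisj hyX) hy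
    have hnY : nY ≤ f y := Finset.inf'_le f hy
    have hfy : f y ≤ q := hbd y
    simp only [h, if_pos hx, if_neg hyX]
    rw [Nat.dist_eq_sub_of_le hxy.le]
    omega
  rcases hbip u v huv with ⟨hu, hv⟩ | ⟨hu, hv⟩
  · exact key u hu v hv
  · rw [Nat.dist_comm]
    have := key v hv u hu
    omega
end

section
/- Let f be a set-ordered graceful labeling of a connected bipartite graph G with bipartition (X,Y) and q edges. Define a total labeling h* by h*(x) = f(x) for x ∈ X, h*(y) = q + min f(Y) − f(y) for y ∈ Y, and h*(xy) = q + 1 − f(xy) for each edge xy, where f(xy) = |f(x) − f(y)|. Then the edge colors of h* form exactly {1,2,…,q} and for every edge xy one has h*(x) + h*(y) − h*(xy) = min f(Y) − 1; that is, h* is a set-ordered felicitous-difference total labeling of G with constant min f(Y) − 1. -/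
/-- The total labeling `h*`, given by `h*(x) = f(x)` on `X`,
`h*(y) = q + min f(Y) - f(y)` on `Y` and `h*(xy) = q + 1 - f(xy)` on edges, built from a
set-ordered graceful labeling `f` of a connected bipartite graph `G` with `q` edges, is a
set-ordered felicitous-difference total labeling of `G` with constant `min f(Y) - 1`:
its edge colors form exactly `{1, …, q}` and `h*(x) + h*(y) - h*(xy) = min f(Y) - 1` for
every edge `xy`. -/
theorem Y_set_dual_star_is_felicitous_difference
    {V : Type*} [Fintype V] [DecidableEq V]
    (G : SimpleGraph V) [DecidableRel G.Adj]
    (hconn : G.Connected)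
    (X Y : Finset V) (hXne : X.Nonempty) (hYne : Y.Nonempty)
    (hdisj : Disjoint X Y) (hcover : X ∪ Y = Finset.univ)
    (hbip : ∀ u v, G.Adj u v → (u ∈ X ∧ v ∈ Y) ∨ (u ∈ Y ∧ v ∈ X))
    (q : ℕ) (hq : q = G.edgeFinset.card) (hq1 : 1 ≤ q)
    (f : V → ℕ) (hinj : Function.Injective f) (hbd : ∀ v, f v ≤ q)
    (hedges : {n : ℕ | ∃ u v, G.Adj u v ∧ n = Nat.dist (f u) (f v)} = Set.Icc 1 q)
    (hso : ∀ x ∈ X, ∀ y ∈ Y, f x < f y) :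
    let nY := Y.inf' hYne f
    let h : V → ℕ := fun v => if v ∈ X then f v else q + nY - f v
    {n : ℕ | ∃ u v, G.Adj u v ∧ n = q + 1 - Nat.dist (f u) (f v)} = Set.Icc 1 q ∧
    (∀ u v, G.Adj u v →
      (h u : ℤ) + (h v : ℤ) - ((q + 1 - Nat.dist (f u) (f v) : ℕ) : ℤ)
        = (nY : ℤ) - 1) := by
  intro nY h
  have hdist : ∀ u v, G.Adj u v → Nat.dist (f u) (f v) ∈ Set.Icc 1 q := by
    intro u v huv
    rw [← hedges]; exact ⟨u, v, huv, rfl⟩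
  have key : ∀ x ∈ X, ∀ y ∈ Y, G.Adj x y →
      (h x : ℤ) + (h y : ℤ) - ((q + 1 - Nat.dist (f x) (f y) : ℕ) : ℤ) = (nY : ℤ) - 1 := by
    intro x hx y hy hxy
    have hlt : f x < f y := hso x hx y hy
    have hyX : y ∉ X := fun hh => Finset.disjoint_left.mp hdisj hh hy
    have hnY : nY ≤ f y := Finset.inf'_le f hy
    have hfy : f y ≤ q := hbd y
    have hd2 : Nat.dist (f x) (f y) = f y - f x := Nat.dist_eq_sub_of_le hlt.le
    simp only [h, if_pos hx, if_neg hyX, hd2]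
    omega
  constructor
  · ext n
    simp only [Set.mem_setOf_eq, Set.mem_Icc]
    constructor
    · rintro ⟨u, v, huv, rfl⟩
      have := hdist u v huv
      simp only [Set.mem_Icc] at this
      omega
    · rintro ⟨h1, h2⟩
      have hm : (q + 1 - n) ∈ Set.Icc 1 q := by simp only [Set.mem_Icc]; omega
      rw [← hedges] at hm
      obtain ⟨u, v, huv, hd⟩ := hm
      exact ⟨u, v, huv, by omega⟩
  · intro u v huv
    rcases hbip u v huv with ⟨hu, hv⟩ | ⟨hu, hv⟩
    · exact key u hu v hv huv
    · have := key v hv u hu huv.symm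
      rw [Nat.dist_comm] at this
      linarith
end

section
/- Let f be a set-ordered odd-graceful total labeling of a connected bipartite graph G with bipartition (X,Y) and q edges. Define a total labeling h by h(x) = max f(X) − f(x) for x ∈ X, h(y) = f(y) for y ∈ Y, and h(xy) = f(xy) for each edge xy, where f(xy) = |f(x) − f(y)|. Then h is injective on vertices with max h(X) < min h(Y), its edge colors form exactly the odd set {1,3,…,2q−1}, and for every edge xy one has h(x) + h(y) − h(xy) = max f(X); that is, h is a set-ordered odd-edge felicitous-difference total labeling of G with constant max f(X). -/
/-- From a set-ordered odd-graceful total labeling `f` of a connected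
bipartite graph `G` with `q` edges, the total labeling `h` given by
`h(x) = max f(X) - f(x)` on `X`, `h(y) = f(y)` on `Y` and `h(xy) = f(xy)` on edges is a
set-ordered odd-edge felicitous-difference total labeling with constant `max f(X)`: `h`
is injective on vertices with `max h(X) < min h(Y)`, its edge colors form exactly
`{1, 3, …, 2q - 1}`, and `h(x) + h(y) - h(xy) = max f(X)` for every edge `xy`. -/
theorem odd_graceful_gives_odd_edge_felicitous_difference
    {V : Type*} [Fintype V] [DecidableEq V]
    (G : SimpleGraph V) [DecidableRel G.Adj]
    (hconn : G.Connected)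
    (X Y : Finset V) (hXne : X.Nonempty) (hYne : Y.Nonempty)
    (hdisj : Disjoint X Y) (hcover : X ∪ Y = Finset.univ)
    (hbip : ∀ u v, G.Adj u v → (u ∈ X ∧ v ∈ Y) ∨ (u ∈ Y ∧ v ∈ X))
    (q : ℕ) (hq : q = G.edgeFinset.card) (hq1 : 1 ≤ q)
    (f : V → ℕ) (hinj : Function.Injective f) (hbd : ∀ v, f v ≤ 2 * q - 1)
    (hedges : {n : ℕ | ∃ u v, G.Adj u v ∧ n = Nat.dist (f u) (f v)}
        = {n : ℕ | Odd n ∧ n < 2 * q})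
    (hso : ∀ x ∈ X, ∀ y ∈ Y, f x < f y) :
    let mX := X.sup' hXne f
    let h : V → ℕ := fun v => if v ∈ X then mX - f v else f v
    Function.Injective h ∧
    (∀ x ∈ X, ∀ y ∈ Y, h x < h y) ∧
    {n : ℕ | ∃ u v, G.Adj u v ∧ n = Nat.dist (f u) (f v)}
        = {n : ℕ | Odd n ∧ n < 2 * q} ∧
    (∀ u v, G.Adj u v →
      (h u : ℤ) + (h v : ℤ) - (Nat.dist (f u) (f v) : ℤ) = (mX : ℤ)) := by
  intro mX h
  have hle : ∀ x ∈ X, f x ≤ mX := fun x hx => Finset.le_sup' f hx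
  have hlt : ∀ y ∈ Y, mX < f y := by
    intro y hy
    exact (Finset.sup'_lt_iff hXne).mpr (fun x hx => hso x hx y hy)
  have hmemY : ∀ v : V, v ∉ X → v ∈ Y := by
    intro v hv
    have := Finset.mem_univ v
    rw [← hcover, Finset.mem_union] at this
    tauto
  have hord : ∀ x ∈ X, ∀ y ∈ Y, h x < h y := by
    intro x hx y hy
    have hyX : y ∉ X := fun hyX => (Finset.disjoint_left.mp hdisj hyX hy)
    simp only [h, if_pos hx, if_neg hyX]
    have := hle x hx
    have := hlt y hy
    omega
  refine ⟨?_, hord, hedges, ?_⟩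
  · intro a b hab
    by_cases ha : a ∈ X <;> by_cases hb : b ∈ X
    · simp only [h, if_pos ha, if_pos hb] at hab
      have h1 := hle a ha
      have h2 := hle b hb
      exact hinj (by omega)
    · exact absurd hab (by have := hord a ha b (hmemY b hb); omega)
    · exact absurd hab (by have := hord b hb a (hmemY a ha); omega)
    · simp only [h, if_neg ha, if_neg hb] at hab
      exact hinj hab
  · intro u v huv
    rcases hbip u v huv with ⟨hu, hv⟩ | ⟨hu, hv⟩
    · have hvX : v ∉ X := fun hvX => (Finset.disjoint_left.mp hdisj hvX hv)
      simp only [h, if_pos hu, if_neg hvX]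
      have h1 := hle u hu
      have h2 := hso u hu v hv
      rw [Nat.dist_eq_sub_of_le h2.le]
      push_cast
      omega
    · have huX : u ∉ X := fun huX => (Finset.disjoint_left.mp hdisj huX hu)
      simp only [h, if_neg huX, if_pos hv]
      have h1 := hle v hv
      have h2 := hso v hv u hu
      rw [Nat.dist_comm, Nat.dist_eq_sub_of_le h2.le]
      push_cast
      omega
end

section
/- Let f be a set-ordered odd-graceful total labeling of a connected bipartite graph G with bipartition (X,Y) and q edges. Define a total labeling h* by h*(x) = max f(X) − f(x) for x ∈ X, h*(y) = f(y) for y ∈ Y, and h*(xy) = 2q − f(xy) for each edge xy, where f(xy) = |f(x) − f(y)|. Then the edge colors of h* form exactly the odd set {1,3,…,2q−1}, and for every edge xy one has h*(x) + h*(xy) + h*(y) = 2q + max f(X); that is, h* is a set-ordered odd-edge edge-magic total labeling of G with magic constant 2q + max f(X). -/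
/-- From a set-ordered odd-graceful total labeling `f` of a connected
bipartite graph `G` with `q` edges, the total labeling `h*` given by
`h*(x) = max f(X) - f(x)` on `X`, `h*(y) = f(y)` on `Y` and `h*(xy) = 2q - f(xy)` on
edges is a set-ordered odd-edge edge-magic total labeling with magic constant
`2q + max f(X)`: its edge colors form exactly `{1, 3, …, 2q - 1}` and
`h*(x) + h*(xy) + h*(y) = 2q + max f(X)` for every edge `xy`. -/
theorem odd_graceful_gives_odd_edge_edge_magic
    {V : Type*} [Fintype V] [DecidableEq V]
    (G : SimpleGraph V) [DecidableRel G.Adj]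
    (hconn : G.Connected)
    (X Y : Finset V) (hXne : X.Nonempty) (hYne : Y.Nonempty)
    (hdisj : Disjoint X Y) (hcover : X ∪ Y = Finset.univ)
    (hbip : ∀ u v, G.Adj u v → (u ∈ X ∧ v ∈ Y) ∨ (u ∈ Y ∧ v ∈ X))
    (q : ℕ) (hq : q = G.edgeFinset.card) (hq1 : 1 ≤ q)
    (f : V → ℕ) (hinj : Function.Injective f) (hbd : ∀ v, f v ≤ 2 * q - 1)
    (hedges : {n : ℕ | ∃ u v, G.Adj u v ∧ n = Nat.dist (f u) (f v)}
        = {n : ℕ | Odd n ∧ n < 2 * q})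
    (hso : ∀ x ∈ X, ∀ y ∈ Y, f x < f y) :
    let mX := X.sup' hXne f
    let h : V → ℕ := fun v => if v ∈ X then mX - f v else f v
    {n : ℕ | ∃ u v, G.Adj u v ∧ n = 2 * q - Nat.dist (f u) (f v)}
        = {n : ℕ | Odd n ∧ n < 2 * q} ∧
    (∀ u v, G.Adj u v →
      h u + (2 * q - Nat.dist (f u) (f v)) + h v = 2 * q + mX) := by
  intro mX h
  have hmem : ∀ u v, G.Adj u v → Odd (Nat.dist (f u) (f v)) ∧ Nat.dist (f u) (f v) < 2 * q := by
    intro u v huv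
    have : Nat.dist (f u) (f v) ∈ {n : ℕ | Odd n ∧ n < 2 * q} := by
      rw [← hedges]; exact ⟨u, v, huv, rfl⟩
    exact this
  constructor
  · ext n
    simp only [Set.mem_setOf_eq]
    constructor
    · rintro ⟨u, v, huv, rfl⟩
      obtain ⟨⟨k, hk⟩, hlt⟩ := hmem u v huv
      exact ⟨⟨q - k - 1, by omega⟩, by omega⟩
    · rintro ⟨⟨k, hk⟩, hlt⟩
      have : (2 * q - n) ∈ {n : ℕ | ∃ u v, G.Adj u v ∧ n = Nat.dist (f u) (f v)} := by
        rw [hedges]; exact ⟨⟨q - k - 1, by omega⟩, by omega⟩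
      obtain ⟨u, v, huv, hd⟩ := this
      exact ⟨u, v, huv, by omega⟩
  · intro u v huv
    obtain ⟨hodd, hlt⟩ := hmem u v huv
    obtain ⟨hu, hv⟩ | ⟨hv, hu⟩ := hbip u v huv
    · have hxy : f u < f v := hso u hu v hv
      have hd : Nat.dist (f u) (f v) = f v - f u := Nat.dist_eq_sub_of_le hxy.le
      have hvX : v ∉ X := fun hc => (Finset.disjoint_left.mp hdisj hc hv)
      have hle : f u ≤ mX := Finset.le_sup' f hu
      simp only [h, if_pos hu, if_neg hvX, hd]
      rw [hd] at hlt
      omega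
    · have hxy : f v < f u := hso v hu u hv
      have hd : Nat.dist (f u) (f v) = f u - f v := (Nat.dist_comm _ _).trans (Nat.dist_eq_sub_of_le hxy.le)
      have huX : u ∉ X := fun hc => (Finset.disjoint_left.mp hdisj hc hv)
      have hle : f v ≤ mX := Finset.le_sup' f hu
      simp only [h, if_pos hu, if_neg huX, hd]
      rw [hd] at hlt
      omega
end

section
/- Let f be a set-ordered odd-graceful total labeling of a connected bipartite graph G with bipartition (X,Y) and q edges. Define a total labeling h by h(x) = f(x) for x ∈ X, h(y) = (2q − 1) + min f(Y) − f(y) for y ∈ Y, and h(xy) = 2q − f(xy) for each edge xy, where f(xy) = |f(x) − f(y)|. Then the edge colors of h form exactly the odd set {1,3,…,2q−1}, and for every edge xy one has h(x) + h(y) − h(xy) = min f(Y) − 1; that is, h is a set-ordered odd-edge felicitous-difference total labeling of G with constant min f(Y) − 1. -/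
/-- From a set-ordered odd-graceful total labeling `f` of a connected
bipartite graph `G` with `q` edges, the total labeling `h` given by `h(x) = f(x)` on `X`,
`h(y) = (2q - 1) + min f(Y) - f(y)` on `Y` and `h(xy) = 2q - f(xy)` on edges is a
set-ordered odd-edge felicitous-difference total labeling with constant `min f(Y) - 1`:
its edge colors form exactly `{1, 3, …, 2q - 1}` and
`h(x) + h(y) - h(xy) = min f(Y) - 1` for every edge `xy`. -/
theorem odd_graceful_Y_dual_gives_odd_edge_felicitous_difference
    {V : Type*} [Fintype V] [DecidableEq V]
    (G : SimpleGraph V) [DecidableRel G.Adj]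
    (hconn : G.Connected)
    (X Y : Finset V) (hXne : X.Nonempty) (hYne : Y.Nonempty)
    (hdisj : Disjoint X Y) (hcover : X ∪ Y = Finset.univ)
    (hbip : ∀ u v, G.Adj u v → (u ∈ X ∧ v ∈ Y) ∨ (u ∈ Y ∧ v ∈ X))
    (q : ℕ) (hq : q = G.edgeFinset.card) (hq1 : 1 ≤ q)
    (f : V → ℕ) (hinj : Function.Injective f) (hbd : ∀ v, f v ≤ 2 * q - 1)
    (hedges : {n : ℕ | ∃ u v, G.Adj u v ∧ n = Nat.dist (f u) (f v)}
        = {n : ℕ | Odd n ∧ n < 2 * q})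
    (hso : ∀ x ∈ X, ∀ y ∈ Y, f x < f y) :
    let nY := Y.inf' hYne f
    let h : V → ℕ := fun v => if v ∈ X then f v else (2 * q - 1) + nY - f v
    {n : ℕ | ∃ u v, G.Adj u v ∧ n = 2 * q - Nat.dist (f u) (f v)}
        = {n : ℕ | Odd n ∧ n < 2 * q} ∧
    (∀ u v, G.Adj u v →
      (h u : ℤ) + (h v : ℤ) - ((2 * q - Nat.dist (f u) (f v) : ℕ) : ℤ)
        = (nY : ℤ) - 1) := by
  intro nY hfun
  constructor
  · ext n
    simp only [Set.mem_setOf_eq]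
    constructor
    · rintro ⟨u, v, huv, rfl⟩
      have hd : Nat.dist (f u) (f v) ∈ {n : ℕ | Odd n ∧ n < 2 * q} := by
        rw [← hedges]; exact ⟨u, v, huv, rfl⟩
      obtain ⟨⟨k, hk⟩, hlt⟩ := hd
      exact ⟨⟨q - k - 1, by omega⟩, by omega⟩
    · rintro ⟨⟨k, hk⟩, hlt⟩
      have hmem : (2 * q - n) ∈ {n : ℕ | Odd n ∧ n < 2 * q} :=
        ⟨⟨q - k - 1, by omega⟩, by omega⟩
      rw [← hedges] at hmem
      obtain ⟨u, v, huv, hd⟩ := hmem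
      exact ⟨u, v, huv, by omega⟩
  · intro u v huv
    have hd : Nat.dist (f u) (f v) ∈ {n : ℕ | Odd n ∧ n < 2 * q} := by
      rw [← hedges]; exact ⟨u, v, huv, rfl⟩
    obtain ⟨hodd, hlt⟩ := hd
    show ((if u ∈ X then f u else (2 * q - 1) + nY - f u : ℕ) : ℤ)
        + ((if v ∈ X then f v else (2 * q - 1) + nY - f v : ℕ) : ℤ)
        - ((2 * q - Nat.dist (f u) (f v) : ℕ) : ℤ) = (nY : ℤ) - 1
    rcases hbip u v huv with ⟨hu, hv⟩ | ⟨hu, hv⟩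
    · have hxy : f u < f v := hso u hu v hv
      have hvx : v ∉ X := fun hc => (Finset.disjoint_left.mp hdisj hc hv).elim
      have hbv := hbd v
      have hnYv : nY ≤ f v := Finset.inf'_le f hv
      rw [if_pos hu, if_neg hvx, Nat.dist_eq_sub_of_le (le_of_lt hxy)]
      omega
    · have hxy : f v < f u := hso v hv u hu
      have hux : u ∉ X := fun hc => (Finset.disjoint_left.mp hdisj hc hu).elim
      have hbu := hbd u
      have hnYu : nY ≤ f u := Finset.inf'_le f hu
      rw [if_neg hux, if_pos hv, Nat.dist_comm (f u) (f v), Nat.dist_eq_sub_of_le (le_of_lt hxy)]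
      omega
end

section
/- If a connected bipartite graph G admits a set-ordered odd-graceful total labeling, then G admits all four of the following: a set-ordered odd-edge edge-magic total labeling, a set-ordered odd-edge edge-difference total labeling, a set-ordered odd-edge felicitous-difference total labeling, and a set-ordered odd-edge graceful-difference total labeling. -/
/-- If a connected bipartite graph `G` admits a set-ordered odd-graceful
total labeling, then `G` admits a set-ordered odd-edge edge-magic total labeling, a
set-ordered odd-edge edge-difference total labeling, a set-ordered odd-edge
felicitous-difference total labeling, and a set-ordered odd-edge graceful-difference
total labeling. -/
theorem odd_graceful_gives_four_odd_edge_magic_type_labelings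
    {V : Type*} [Fintype V] [DecidableEq V]
    (G : SimpleGraph V) [DecidableRel G.Adj]
    (hconn : G.Connected)
    (X Y : Finset V) (hXne : X.Nonempty) (hYne : Y.Nonempty)
    (hdisj : Disjoint X Y) (hcover : X ∪ Y = Finset.univ)
    (hbip : ∀ u v, G.Adj u v → (u ∈ X ∧ v ∈ Y) ∨ (u ∈ Y ∧ v ∈ X))
    (q : ℕ) (hq : q = G.edgeFinset.card) (hq1 : 1 ≤ q)
    (f : V → ℕ) (hinj : Function.Injective f) (hbd : ∀ v, f v ≤ 2 * q - 1)
    (hedges : {n : ℕ | ∃ u v, G.Adj u v ∧ n = Nat.dist (f u) (f v)}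
        = {n : ℕ | Odd n ∧ n < 2 * q})
    (hso : ∀ x ∈ X, ∀ y ∈ Y, f x < f y) :
    -- set-ordered odd-edge edge-magic total labeling
    (∃ (gV : V → ℕ) (gE : Sym2 V → ℕ) (k : ℕ),
      Function.Injective gV ∧
      gE '' G.edgeSet = {n : ℕ | Odd n ∧ n < 2 * q} ∧
      ((∀ x ∈ X, ∀ y ∈ Y, gV x < gV y) ∨ (∀ y ∈ Y, ∀ x ∈ X, gV y < gV x)) ∧
      (∀ u v, G.Adj u v → gV u + gE s(u, v) + gV v = k)) ∧
    -- set-ordered odd-edge edge-difference total labeling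
    (∃ (gV : V → ℕ) (gE : Sym2 V → ℕ) (k : ℕ),
      Function.Injective gV ∧
      gE '' G.edgeSet = {n : ℕ | Odd n ∧ n < 2 * q} ∧
      ((∀ x ∈ X, ∀ y ∈ Y, gV x < gV y) ∨ (∀ y ∈ Y, ∀ x ∈ X, gV y < gV x)) ∧
      (∀ u v, G.Adj u v → gE s(u, v) + Nat.dist (gV u) (gV v) = k)) ∧
    -- set-ordered odd-edge felicitous-difference total labeling
    (∃ (gV : V → ℕ) (gE : Sym2 V → ℕ) (k : ℕ),
      Function.Injective gV ∧
      gE '' G.edgeSet = {n : ℕ | Odd n ∧ n < 2 * q} ∧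
      ((∀ x ∈ X, ∀ y ∈ Y, gV x < gV y) ∨ (∀ y ∈ Y, ∀ x ∈ X, gV y < gV x)) ∧
      (∀ u v, G.Adj u v → Nat.dist (gV u + gV v) (gE s(u, v)) = k)) ∧
    -- set-ordered odd-edge graceful-difference total labeling
    (∃ (gV : V → ℕ) (gE : Sym2 V → ℕ) (k : ℕ),
      Function.Injective gV ∧
      gE '' G.edgeSet = {n : ℕ | Odd n ∧ n < 2 * q} ∧
      ((∀ x ∈ X, ∀ y ∈ Y, gV x < gV y) ∨ (∀ y ∈ Y, ∀ x ∈ X, gV y < gV x)) ∧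
      (∀ u v, G.Adj u v → Nat.dist (Nat.dist (gV u) (gV v)) (gE s(u, v)) = k)) := by
  classical
  -- basic facts
  have hfbd : ∀ v, f v < 2 * q := fun v => lt_of_le_of_lt (hbd v) (by omega)
  set gE1 : Sym2 V → ℕ := Sym2.lift ⟨fun u v => Nat.dist (f u) (f v),
    fun u v => Nat.dist_comm (f u) (f v)⟩ with hgE1
  have hgE1mk : ∀ u v, gE1 s(u, v) = Nat.dist (f u) (f v) := fun u v => rfl
  have hd : ∀ u v, G.Adj u v → Odd (Nat.dist (f u) (f v)) ∧ Nat.dist (f u) (f v) < 2 * q := by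
    intro u v huv
    have : Nat.dist (f u) (f v) ∈ {n : ℕ | ∃ u v, G.Adj u v ∧ n = Nat.dist (f u) (f v)} :=
      ⟨u, v, huv, rfl⟩
    rwa [hedges] at this
  have himg1 : gE1 '' G.edgeSet = {n : ℕ | Odd n ∧ n < 2 * q} := by
    rw [← hedges]
    ext n
    constructor
    · rintro ⟨e, he, rfl⟩
      induction e using Sym2.ind with
      | _ u v => exact ⟨u, v, he, rfl⟩
    · rintro ⟨u, v, huv, rfl⟩
      exact ⟨s(u, v), huv, rfl⟩
  set gE2 : Sym2 V → ℕ := fun e => 2 * q - gE1 e with hgE2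
  have himg2 : gE2 '' G.edgeSet = {n : ℕ | Odd n ∧ n < 2 * q} := by
    ext n
    constructor
    · rintro ⟨e, he, rfl⟩
      induction e using Sym2.ind with
      | _ u v =>
        obtain ⟨ho, hl⟩ := hd u v he
        rw [Nat.odd_iff] at ho
        simp only [hgE2, hgE1mk, Set.mem_setOf_eq, Nat.odd_iff]
        omega
    · rintro ⟨ho, hl⟩
      have : (2 * q - n) ∈ {n : ℕ | Odd n ∧ n < 2 * q} := by
        rw [Nat.odd_iff] at ho
        simp only [Set.mem_setOf_eq, Nat.odd_iff]
        omega
      rw [← hedges] at this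
      obtain ⟨u, v, huv, hdv⟩ := this
      refine ⟨s(u, v), huv, ?_⟩
      simp only [hgE2, hgE1mk]
      omega
  set g : V → ℕ := fun v => if v ∈ X then f v else 10 * q - f v with hg
  have hYnotX : ∀ y ∈ Y, y ∉ X := fun y hy hx => (Finset.disjoint_left.1 hdisj) hx hy
  have hallXY : ∀ v : V, v ∈ X ∨ v ∈ Y := by
    intro v
    have : v ∈ X ∪ Y := hcover ▸ Finset.mem_univ v
    exact Finset.mem_union.1 this
  have hgX : ∀ x ∈ X, g x = f x := fun x hx => by simp [hg, hx]
  have hgY : ∀ y ∈ Y, g y = 10 * q - f y := fun y hy => by simp [hg, hYnotX y hy]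
  have hginj : Function.Injective g := by
    intro u v huv
    simp only [hg] at huv
    by_cases hu : u ∈ X <;> by_cases hv : v ∈ X <;> simp [hu, hv] at huv
    · exact hinj huv
    · have := hfbd u; have := hfbd v; omega
    · have := hfbd u; have := hfbd v; omega
    · have := hfbd u; have := hfbd v; exact hinj (by omega)
  have hgso : ∀ x ∈ X, ∀ y ∈ Y, g x < g y := by
    intro x hx y hy
    rw [hgX x hx, hgY y hy]
    have := hfbd x; have := hfbd y; omega
  refine ⟨?_, ?_, ?_, ?_⟩
  · -- edge-magic: g, gE1, k = 10q
    refine ⟨g, gE1, 10 * q, hginj, himg1, Or.inl hgso, ?_⟩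
    intro u v huv
    rcases hbip u v huv with ⟨hu, hv⟩ | ⟨hu, hv⟩
    · rw [hgX u hu, hgY v hv, hgE1mk]
      have hlt := hso u hu v hv
      have := hfbd v
      rw [Nat.dist_eq_sub_of_le hlt.le]
      omega
    · rw [hgY u hu, hgX v hv, hgE1mk]
      have hlt := hso v hv u hu
      have := hfbd u
      rw [Nat.dist_eq_sub_of_le_right hlt.le]
      omega
  · -- edge-difference: f, gE2, k = 2q
    refine ⟨f, gE2, 2 * q, hinj, himg2, Or.inl hso, ?_⟩
    intro u v huv
    obtain ⟨_, hl⟩ := hd u v huv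
    simp only [hgE2, hgE1mk]
    omega
  · -- felicitous-difference: g, gE2, k = 8q
    refine ⟨g, gE2, 8 * q, hginj, himg2, Or.inl hgso, ?_⟩
    intro u v huv
    obtain ⟨_, hl⟩ := hd u v huv
    simp only [hgE2, hgE1mk]
    rcases hbip u v huv with ⟨hu, hv⟩ | ⟨hu, hv⟩
    · rw [hgX u hu, hgY v hv]
      have hlt := hso u hu v hv
      have := hfbd v
      rw [Nat.dist_eq_sub_of_le hlt.le] at hl ⊢
      rw [Nat.dist_eq_sub_of_le_right (by omega)]
      omega
    · rw [hgY u hu, hgX v hv]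
      have hlt := hso v hv u hu
      have := hfbd u
      rw [Nat.dist_eq_sub_of_le_right hlt.le] at hl ⊢
      rw [Nat.dist_eq_sub_of_le_right (by omega)]
      omega
  · -- graceful-difference: f, gE1, k = 0
    refine ⟨f, gE1, 0, hinj, himg1, Or.inl hso, ?_⟩
    intro u v huv
    rw [hgE1mk, Nat.dist_self]
end

section
/- Every finite tree T with q ≥ 1 edges admits an odd-edge graceful-difference total coloring: there exist a constant k ≥ 0 and an assignment f of natural numbers to the vertices and edges of T such that the set of edge colors {f(e) : e ∈ E(T)} equals the odd set {1,3,…,2q−1} and ||f(u) − f(v)| − f(uv)| = k for every edge uv of T. -/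
/-!
Label the edges bijectively by `1, 3, …, 2q - 1` in any order, and give each vertex the sum of
the labels along the unique path from a fixed root to it. Along an edge one of the two paths
extends the other by that edge, so the vertex labels differ exactly by the edge label and the
constant is `k = 0`.
-/

open SimpleGraph

namespace SimpleGraph

variable {V : Type*} {G : SimpleGraph V}

lemma IsAcyclic.dist_sum_map_edges_of_adj (hG : G.IsAcyclic) (w : Sym2 V → ℕ) {r u v : V}
    {p : G.Walk r u} {q : G.Walk r v} (hp : p.IsPath) (hq : q.IsPath) (h : G.Adj u v) :
    Nat.dist (p.edges.map w).sum (q.edges.map w).sum = w s(u, v) := by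
  by_cases hv : v ∈ p.support
  · rw [hG.path_concat hq hp h.symm hv]
    simp [Sym2.eq_swap, Nat.dist]
  · have hu : u ∈ q.support := hG.mem_support_of_ne_mem_support_of_adj_of_isPath hq hp h.symm hv
    rw [hG.path_concat hp hq h hu]
    simp [Nat.dist]

lemma IsAcyclic.exists_dist_eq_of_adj (hG : G.IsAcyclic) (w : Sym2 V → ℕ) :
    ∃ f : V → ℕ, ∀ u v, G.Adj u v → Nat.dist (f u) (f v) = w s(u, v) := by
  let root : V → V := fun v => (G.connectedComponentMk v).out
  have hroot : ∀ v, ∃ n, ∃ p : G.Walk (root v) v, p.IsPath ∧ n = (p.edges.map w).sum :=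
    fun v =>
      have ⟨p, hp⟩ := (ConnectedComponent.eq.mp (G.connectedComponentMk v).out_eq).exists_isPath
      ⟨_, p, hp, rfl⟩
  choose f p hp hf using hroot
  refine ⟨f, fun u v h => ?_⟩
  have hroot_eq : root v = root u := by
    simp only [root, ConnectedComponent.connectedComponentMk_eq_of_adj h]
  rw [hf, hf, ← Walk.edges_copy (p v) hroot_eq rfl]
  exact hG.dist_sum_map_edges_of_adj w (hp u) ((Walk.isPath_copy _ _ _).mpr (hp v)) h

end SimpleGraph

lemma Finset.exists_image_eq_Iio_card {α : Type*} (s : Finset α) :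
    ∃ g : α → ℕ, g '' s = Set.Iio s.card := by
  classical
  refine ⟨fun a => if h : a ∈ s then s.equivFin ⟨a, h⟩ else 0, ?_⟩
  rw [Set.image_eq_range, ← Fin.range_val, ← s.equivFin.surjective.range_comp]
  congr 1
  ext ⟨a, ha⟩
  exact dif_pos ha

lemma Nat.image_two_mul_add_one_Iio (q : ℕ) :
    (fun i => 2 * i + 1) '' Set.Iio q = {n : ℕ | Odd n ∧ n < 2 * q} := by
  ext n
  simp only [Set.mem_image, Set.mem_Iio, Set.mem_ofPred_eq, Odd]
  constructor
  · rintro ⟨i, hi, rfl⟩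
    exact ⟨⟨i, rfl⟩, by omega⟩
  · rintro ⟨⟨i, rfl⟩, hi⟩
    exact ⟨i, by omega, rfl⟩

theorem tree_admits_odd_edge_graceful_difference_total_coloring_general
    {V : Type*} [Fintype V]
    (T : SimpleGraph V) [DecidableRel T.Adj]
    (hT : T.IsTree)
    (q : ℕ) (hq : q = T.edgeFinset.card) :
    ∃ (fV : V → ℕ) (fE : Sym2 V → ℕ) (k : ℕ),
      fE '' T.edgeSet = {n : ℕ | Odd n ∧ n < 2 * q} ∧
      ∀ u v, T.Adj u v → Nat.dist (Nat.dist (fV u) (fV v)) (fE s(u, v)) = k := by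
  obtain ⟨g, hg⟩ := T.edgeFinset.exists_image_eq_Iio_card
  obtain ⟨fV, hfV⟩ := hT.isAcyclic.exists_dist_eq_of_adj ((2 * · + 1) ∘ g)
  refine ⟨fV, (2 * · + 1) ∘ g, 0, ?_, fun u v h => by rw [hfV u v h, Nat.dist_self]⟩
  rw [← coe_edgeFinset, Set.image_comp, hg, ← hq, Nat.image_two_mul_add_one_Iio]

/-- Every finite tree `T` with `q ≥ 1` edges admits an odd-edge
graceful-difference total coloring: there are a constant `k` and colors on vertices and
edges such that the edge-color set is exactly `{1, 3, …, 2q - 1}` and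
`||f(u) - f(v)| - f(uv)| = k` for every edge `uv`. -/
theorem tree_admits_odd_edge_graceful_difference_total_coloring
    {V : Type*} [Fintype V] [DecidableEq V]
    (T : SimpleGraph V) [DecidableRel T.Adj]
    (hT : T.IsTree)
    (q : ℕ) (hq : q = T.edgeFinset.card) (hq1 : 1 ≤ q) :
    ∃ (fV : V → ℕ) (fE : Sym2 V → ℕ) (k : ℕ),
      fE '' T.edgeSet = {n : ℕ | Odd n ∧ n < 2 * q} ∧
      ∀ u v, T.Adj u v → Nat.dist (Nat.dist (fV u) (fV v)) (fE s(u, v)) = k :=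
  tree_admits_odd_edge_graceful_difference_total_coloring_general T hT q hq
end

section
/- Every finite tree T with q ≥ 1 edges admits an odd-edge felicitous-difference total coloring: there exist a constant k ≥ 0 and an assignment f of natural numbers to the vertices and edges of T such that the set of edge colors {f(e) : e ∈ E(T)} equals the odd set {1,3,…,2q−1} and |f(u) + f(v) − f(uv)| = k for every edge uv of T. -/
open SimpleGraph Finset

/-- Recursive vertex labelling along a tree: root gets 0, each other vertex `v`
gets `o v - f (parent v)`. -/
private noncomputable def treeFelicF {V : Type*} [DecidableEq V] (G : SimpleGraph V) (r : V)
    (parent : V → V) (o : V → ℕ)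
    (hp : ∀ v, v ≠ r → G.dist r (parent v) < G.dist r v) (v : V) : ℕ :=
  if h : v = r then 0 else o v - treeFelicF G r parent o hp (parent v)
termination_by G.dist r v
decreasing_by exact hp v h

private lemma tree_path_length_eq_dist {V : Type*} {G : SimpleGraph V} (hG : G.IsTree)
    {a b : V} (p : G.Walk a b) (hp : p.IsPath) : p.length = G.dist a b := by
  obtain ⟨q, hq, hql⟩ := hG.isConnected.exists_path_of_dist a b
  have h := hG.IsAcyclic.path_unique ⟨p, hp⟩ ⟨q, hq⟩
  have : p = q := congrArg Subtype.val h
  rw [this, hql]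

/-- In a tree, adjacent vertices have distances from `r` differing by exactly one. -/
private lemma tree_adj_dist {V : Type*} [DecidableEq V] {G : SimpleGraph V} (hG : G.IsTree) (r : V)
    {u v : V} (h : G.Adj u v) :
    G.dist r u + 1 = G.dist r v ∨ G.dist r v + 1 = G.dist r u := by
  obtain ⟨Q, hQ, hQl⟩ := hG.isConnected.exists_path_of_dist r v
  by_cases hu : u ∈ Q.support
  · left
    have ht : (Q.takeUntil u hu).IsPath := hQ.takeUntil hu
    have hd : (Q.dropUntil u hu).IsPath := hQ.dropUntil hu
    have h1 : (Q.takeUntil u hu).length = G.dist r u := tree_path_length_eq_dist hG _ ht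
    have h2 : (Q.dropUntil u hu).length = G.dist u v := tree_path_length_eq_dist hG _ hd
    have h3 : G.dist u v = 1 := SimpleGraph.dist_eq_one_iff_adj.2 h
    have h4 := congrArg SimpleGraph.Walk.length (Q.take_spec hu)
    rw [SimpleGraph.Walk.length_append, h1, h2, h3, hQl] at h4
    omega
  · right
    have hP : (SimpleGraph.Walk.cons h Q.reverse).IsPath := by
      refine (hQ.reverse).cons ?_
      rwa [SimpleGraph.Walk.support_reverse, List.mem_reverse]
    have := tree_path_length_eq_dist hG _ hP
    rw [SimpleGraph.Walk.length_cons, SimpleGraph.Walk.length_reverse, hQl] at this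
    have hc : G.dist u r = G.dist r u := SimpleGraph.dist_comm
    omega

/-- In a tree, every non-root vertex has a neighbour strictly closer to the root. -/
private lemma tree_exists_parent {V : Type*} [DecidableEq V] {G : SimpleGraph V} (hG : G.IsTree) (r : V)
    {v : V} (hv : v ≠ r) :
    ∃ u, G.Adj u v ∧ G.dist r u + 1 = G.dist r v := by
  obtain ⟨Q, hQ, hQl⟩ := hG.isConnected.exists_path_of_dist r v
  have hQr : Q.reverse.IsPath := hQ.reverse
  have hd0 : G.dist r v ≠ 0 := by
    rw [SimpleGraph.dist_ne_zero_iff_ne_and_reachable]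
    exact ⟨fun hrv => hv hrv.symm, hG.isConnected.preconnected r v⟩
  have hnn : ¬ Q.reverse.Nil := by
    rw [SimpleGraph.Walk.not_nil_iff_lt_length, SimpleGraph.Walk.length_reverse, hQl]
    omega
  obtain ⟨x, hadj, p, hR⟩ := SimpleGraph.Walk.not_nil_iff.1 hnn
  rw [hR, SimpleGraph.Walk.cons_isPath_iff] at hQr
  refine ⟨x, hadj.symm, ?_⟩
  have h1 : p.reverse.length = G.dist r x := tree_path_length_eq_dist hG _ (hQr.1.reverse)
  have h2 := congrArg SimpleGraph.Walk.length hR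
  rw [SimpleGraph.Walk.length_reverse, hQl, SimpleGraph.Walk.length_cons] at h2
  rw [SimpleGraph.Walk.length_reverse] at h1
  omega

/-- In a tree, the closer neighbour is unique. -/
private lemma tree_parent_unique {V : Type*} [DecidableEq V] {G : SimpleGraph V} (hG : G.IsTree) (r : V)
    {v u w : V} (hu : G.Adj u v) (hw : G.Adj w v)
    (hud : G.dist r u + 1 = G.dist r v) (hwd : G.dist r w + 1 = G.dist r v) : u = w := by
  have key : ∀ (x : V) (hx : G.Adj x v), G.dist r x + 1 = G.dist r v →
      ∃ (P : G.Walk r v), P.IsPath ∧ ∃ (p : G.Walk r x), P = p.concat hx := by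
    intro x hx hxd
    obtain ⟨p, hp, hpl⟩ := hG.isConnected.exists_path_of_dist r x
    have hvns : v ∉ p.support := by
      intro hmem
      have := tree_path_length_eq_dist hG _ (hp.takeUntil hmem)
      have hle := p.length_takeUntil_le hmem
      omega
    refine ⟨p.concat hx, ?_, p, rfl⟩
    rw [← SimpleGraph.Walk.isPath_reverse_iff, SimpleGraph.Walk.reverse_concat]
    refine (hp.reverse).cons ?_
    rwa [SimpleGraph.Walk.support_reverse, List.mem_reverse]
  obtain ⟨P1, hP1, p1, hp1⟩ := key u hu hud
  obtain ⟨P2, hP2, p2, hp2⟩ := key w hw hwd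
  have hPP : P1 = P2 := by
    have := hG.IsAcyclic.path_unique ⟨P1, hP1⟩ ⟨P2, hP2⟩
    exact congrArg Subtype.val this
  rw [hp1, hp2] at hPP
  obtain ⟨huw, -⟩ := SimpleGraph.Walk.concat_inj hPP
  exact huw

/-- Every finite tree `T` with `q ≥ 1` edges admits an odd-edge
felicitous-difference total coloring: there are a constant `k` and colors on vertices
and edges such that the edge-color set is exactly `{1, 3, …, 2q - 1}` and
`|f(u) + f(v) - f(uv)| = k` for every edge `uv`. -/
theorem tree_admits_odd_edge_felicitous_difference_total_coloring
    {V : Type*} [Fintype V] [DecidableEq V]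
    (T : SimpleGraph V) [DecidableRel T.Adj]
    (hT : T.IsTree)
    (q : ℕ) (hq : q = T.edgeFinset.card) (hq1 : 1 ≤ q) :
    ∃ (fV : V → ℕ) (fE : Sym2 V → ℕ) (k : ℕ),
      fE '' T.edgeSet = {n : ℕ | Odd n ∧ n < 2 * q} ∧
      ∀ u v, T.Adj u v → Nat.dist (fV u + fV v) (fE s(u, v)) = k := by
  classical
  have hne : Nonempty V := hT.isConnected.nonempty
  set N : ℕ := Fintype.card V with hN
  have hcard : q + 1 = N := by rw [hq]; exact hT.card_edgeFinset
  obtain ⟨r⟩ := hne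
  -- parent function
  have hex : ∀ v : V, v ≠ r → ∃ u, T.Adj u v ∧ T.dist r u + 1 = T.dist r v :=
    fun v hv => tree_exists_parent hT r hv
  set parent : V → V := fun v => if h : v = r then r else Classical.choose (hex v h)
    with hparent
  have hpar : ∀ v : V, v ≠ r → T.Adj (parent v) v ∧ T.dist r (parent v) + 1 = T.dist r v := by
    intro v hv
    simp only [hparent, dif_neg hv]
    exact Classical.choose_spec (hex v hv)
  have hpdist : ∀ v, v ≠ r → T.dist r (parent v) < T.dist r v := by
    intro v hv; have := (hpar v hv).2; omega
  -- key function, injective, monotone in distance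
  set ι : V → ℕ := fun v => (Fintype.equivFin V v : ℕ) with hι
  have hιlt : ∀ v, ι v < N := fun v => (Fintype.equivFin V v).isLt
  set key : V → ℕ := fun v => N * T.dist r v + ι v with hkey
  have hkeymono : ∀ a b : V, T.dist r a < T.dist r b → key a < key b := by
    intro a b hab
    have h1 : N * T.dist r a + N ≤ N * T.dist r b := by
      rw [← Nat.mul_succ]
      exact Nat.mul_le_mul_left N hab
    have h2 := hιlt a
    simp only [hkey]
    omega
  have hkeyinj : Function.Injective key := by
    intro a b hab
    simp only [hkey] at hab
    have hda : T.dist r a = T.dist r b := by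
      by_contra hne'
      rcases Nat.lt_or_ge (T.dist r a) (T.dist r b) with h | h
      · exact absurd hab (Nat.ne_of_lt (hkeymono a b h))
      · have h' : T.dist r b < T.dist r a := lt_of_le_of_ne h (fun e => hne' e.symm)
        exact absurd hab.symm (Nat.ne_of_lt (hkeymono b a h'))
    rw [hda] at hab
    have : ι a = ι b := by omega
    exact (Fintype.equivFin V).injective (Fin.ext this)
  -- the finset of keys of non-root vertices
  set s : Finset ℕ := (Finset.univ.erase r).image key with hs
  have hscard : s.card = q := by
    rw [hs, Finset.card_image_of_injective _ hkeyinj,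
      Finset.card_erase_of_mem (Finset.mem_univ r), Finset.card_univ]
    omega
  set iso := s.orderIsoOfFin hscard with hiso
  have hkeymem : ∀ v : V, v ≠ r → key v ∈ s := by
    intro v hv
    exact Finset.mem_image_of_mem key (Finset.mem_erase.2 ⟨hv, Finset.mem_univ v⟩)
  -- odd label for each non-root vertex
  set rank : V → ℕ := fun v => if h : key v ∈ s then (iso.symm ⟨key v, h⟩ : ℕ) else 0
    with hrank
  set o : V → ℕ := fun v => 2 * rank v + 1 with ho
  have hranklt : ∀ v : V, v ≠ r → rank v < q := by
    intro v hv
    simp only [hrank, dif_pos (hkeymem v hv)]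
    exact (iso.symm ⟨key v, hkeymem v hv⟩).isLt
  have hrankmono : ∀ a b : V, a ≠ r → b ≠ r → key a < key b → rank a < rank b := by
    intro a b ha hb hab
    simp only [hrank, dif_pos (hkeymem a ha), dif_pos (hkeymem b hb)]
    have : iso.symm ⟨key a, hkeymem a ha⟩ < iso.symm ⟨key b, hkeymem b hb⟩ :=
      iso.symm.strictMono (Subtype.mk_lt_mk.2 hab)
    exact this
  -- the vertex labelling
  set f : V → ℕ := treeFelicF T r parent o hpdist with hf
  have hfr : f r = 0 := by rw [hf, treeFelicF]; simp
  have hfeq : ∀ v, v ≠ r → f v = o v - f (parent v) := by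
    intro v hv
    conv_lhs => rw [hf, treeFelicF]
    rw [dif_neg hv]
  have hfle : ∀ v, v ≠ r → f v ≤ o v := by
    intro v hv; rw [hfeq v hv]; exact Nat.sub_le _ _
  -- key property: edge sums equal o v
  have hsum : ∀ v, v ≠ r → f (parent v) + f v = o v := by
    intro v hv
    have hple : f (parent v) ≤ o v := by
      by_cases hp : parent v = r
      · rw [hp, hfr]; exact Nat.zero_le _
      · have h1 : f (parent v) ≤ o (parent v) := hfle _ hp
        have h2 : rank (parent v) < rank v :=
          hrankmono _ _ hp hv (hkeymono _ _ (hpdist v hv))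
        simp only [ho] at h1 ⊢
        omega
    rw [hfeq v hv]
    omega
  -- every edge is a parent edge
  have hedge : ∀ u v : V, T.Adj u v → (v ≠ r ∧ u = parent v) ∨ (u ≠ r ∧ v = parent u) := by
    intro u v huv
    rcases tree_adj_dist hT r huv with h | h
    · left
      have hv : v ≠ r := by
        intro hvr; rw [hvr, SimpleGraph.dist_self] at h; omega
      obtain ⟨hadj, hd⟩ := hpar v hv
      exact ⟨hv, tree_parent_unique hT r huv hadj h hd⟩
    · right
      have hu : u ≠ r := by
        intro hur; rw [hur, SimpleGraph.dist_self] at h; omega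
      obtain ⟨hadj, hd⟩ := hpar u hu
      exact ⟨hu, tree_parent_unique hT r huv.symm hadj h hd⟩
  -- edge colouring
  refine ⟨f, Sym2.lift ⟨fun u v => f u + f v, fun u v => by ring⟩, 0, ?_, ?_⟩
  · ext n
    simp only [Set.mem_image, Set.mem_setOf_eq]
    constructor
    · rintro ⟨e, he, rfl⟩
      induction e with
      | h u v =>
        rw [SimpleGraph.mem_edgeSet] at he
        have : f u + f v = o u ∨ f u + f v = o v := by
          rcases hedge u v he with ⟨hv, hu⟩ | ⟨hu, hv⟩
          · right; rw [hu]; exact hsum v hv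
          · left; rw [hv, Nat.add_comm]; exact hsum u hu
        have hov : ∀ w : V, w ≠ r → Odd (o w) ∧ o w < 2 * q := by
          intro w hw
          constructor
          · rw [Nat.odd_iff]
            have : o w = 2 * rank w + 1 := rfl
            omega
          · have := hranklt w hw
            simp only [ho]; omega
        simp only [Sym2.lift_mk]
        rcases hedge u v he with ⟨hv, hu⟩ | ⟨hu, hv⟩
        · rw [hu, hsum v hv]; exact hov v hv
        · rw [hv, Nat.add_comm, hsum u hu]; exact hov u hu
    · rintro ⟨⟨i, rfl⟩, hn⟩
      have hi : i < q := by omega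
      -- find vertex with rank i
      have hmem : ((iso ⟨i, hi⟩ : s) : ℕ) ∈ s := (iso ⟨i, hi⟩).2
      obtain ⟨v, hv, hkv⟩ := Finset.mem_image.1
        (show ((iso ⟨i, hi⟩ : s) : ℕ) ∈ (Finset.univ.erase r).image key from hmem)
      rw [Finset.mem_erase] at hv
      have hvr : v ≠ r := hv.1
      have hrankv : rank v = i := by
        have hsub : (⟨key v, hkeymem v hvr⟩ : s) = iso ⟨i, hi⟩ := Subtype.ext hkv
        have h2 : iso.symm ⟨key v, hkeymem v hvr⟩ = ⟨i, hi⟩ := by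
          have h3 := congrArg iso.symm hsub
          rwa [OrderIso.symm_apply_apply] at h3
        simp only [hrank, dif_pos (hkeymem v hvr), h2]
      refine ⟨s(parent v, v), (hpar v hvr).1, ?_⟩
      simp only [Sym2.lift_mk]
      rw [hsum v hvr]
      have : o v = 2 * rank v + 1 := rfl
      omega
  · intro u v huv
    simp only [Sym2.lift_mk]
    exact Nat.dist_self _
end

section
/- Let G be a finite connected bipartite simple graph with q ≥ 1 edges admitting an odd-edge edge-magic total coloring f with magic constant μ, and let H be any graph obtained from G by adding m ≥ 1 pendant leaves. Then H (which has q + m edges) admits an odd-edge edge-magic total coloring g (with magic constant μ + 2m) that agrees with f on the vertices of G; consequently, starting from G one can build an infinite sequence of graphs, each obtained from the previous one by adding at least one pendant leaf, all of which admit odd-edge edge-magic total colorings with pairwise intersecting vertex-color sets. -/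
/-- If a finite connected bipartite graph `G` with `q ≥ 1` edges admits an
odd-edge edge-magic total coloring `f` with magic constant `μ`, and `H` is obtained from
`G` by adding `m ≥ 1` pendant leaves, then `H` (with `q + m` edges) admits an odd-edge
edge-magic total coloring `g` with magic constant `μ + 2m` that agrees with `f` on the
vertices of `G`. -/
theorem leaf_added_graph_admits_odd_edge_edge_magic
    {V : Type*} [Fintype V] [DecidableEq V]
    (G : SimpleGraph V) [DecidableRel G.Adj]
    (hconn : G.Connected)
    (X Y : Finset V)
    (hdisj : Disjoint X Y) (hcover : X ∪ Y = Finset.univ)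
    (hbip : ∀ u v, G.Adj u v → (u ∈ X ∧ v ∈ Y) ∨ (u ∈ Y ∧ v ∈ X))
    (q : ℕ) (hq : q = G.edgeFinset.card) (hq1 : 1 ≤ q)
    (fV : V → ℕ) (fE : Sym2 V → ℕ) (μ : ℕ)
    (hfE : fE '' G.edgeSet = {n : ℕ | Odd n ∧ n < 2 * q})
    (hf : ∀ u v, G.Adj u v → fV u + fE s(u, v) + fV v = μ)
    (m : ℕ) (hm : 1 ≤ m)
    (H : SimpleGraph (V ⊕ Fin m)) [DecidableRel H.Adj]
    (hHG : ∀ u v : V, H.Adj (Sum.inl u) (Sum.inl v) ↔ G.Adj u v)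
    (hLL : ∀ l l' : Fin m, ¬ H.Adj (Sum.inr l) (Sum.inr l'))
    (hLdeg : ∀ l : Fin m, ∃! u : V, H.Adj (Sum.inr l) (Sum.inl u)) :
    ∃ (gV : V ⊕ Fin m → ℕ) (gE : Sym2 (V ⊕ Fin m) → ℕ),
      gE '' H.edgeSet = {n : ℕ | Odd n ∧ n < 2 * (q + m)} ∧
      (∀ u v, H.Adj u v → gV u + gE s(u, v) + gV v = μ + 2 * m) ∧
      (∀ v : V, gV (Sum.inl v) = fV v) := by
  classical
  -- the unique neighbor of each leaf
  set uof : Fin m → V := fun l => (hLdeg l).choose with huof_def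
  have huof : ∀ l, H.Adj (Sum.inr l) (Sum.inl (uof l)) := fun l => (hLdeg l).choose_spec.1
  have huniq : ∀ l u, H.Adj (Sum.inr l) (Sum.inl u) → u = uof l :=
    fun l u h => (hLdeg l).choose_spec.2 u h
  -- every vertex of G has a neighbor
  have hdeg : ∀ u : V, ∃ w, G.Adj u w := by
    intro u
    obtain ⟨e, he⟩ : G.edgeFinset.Nonempty := Finset.card_pos.mp (by omega)
    induction e using Sym2.ind with
    | _ a b =>
      have hab : G.Adj a b := by simpa [SimpleGraph.mem_edgeFinset] using he
      by_cases h : u = a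
      · exact ⟨b, h ▸ hab⟩
      · obtain ⟨w⟩ := hconn.preconnected u a
        cases w with
        | nil => exact absurd rfl h
        | cons h' p => exact ⟨_, h'⟩
  have hodd : ∀ u v, G.Adj u v → Odd (fE s(u, v)) ∧ fE s(u, v) < 2 * q := by
    intro u v h
    have hmem : fE s(u, v) ∈ fE '' G.edgeSet := ⟨s(u, v), by simpa using h, rfl⟩
    rw [hfE] at hmem
    exact hmem
  have hμ : ∀ u : V, fV u + 1 ≤ μ := by
    intro u
    obtain ⟨w, hw⟩ := hdeg u
    have h1 := hf u w hw
    have h2 : 1 ≤ fE s(u, w) := (hodd u w hw).1.pos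
    omega
  let kf : V ⊕ Fin m → V ⊕ Fin m → ℕ := fun x y =>
    match x, y with
    | Sum.inl u, Sum.inl v => fE s(u, v) + 2 * m
    | Sum.inl _, Sum.inr l => 2 * (l : ℕ) + 1
    | Sum.inr l, Sum.inl _ => 2 * (l : ℕ) + 1
    | Sum.inr _, Sum.inr _ => 0
  have hkf : ∀ x y, kf x y = kf y x := by
    rintro (u | l) (v | l') <;> simp [kf, Sym2.eq_swap]
  let gE : Sym2 (V ⊕ Fin m) → ℕ := Sym2.lift ⟨kf, hkf⟩
  let gV : V ⊕ Fin m → ℕ := Sum.elim fV (fun l => μ + 2 * m - (fV (uof l) + (2 * (l : ℕ) + 1)))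
  refine ⟨gV, gE, ?_, ?_, fun v => rfl⟩
  · apply Set.eq_of_subset_of_subset
    · rintro n ⟨e, he, rfl⟩
      induction e using Sym2.ind with
      | _ x y =>
        rw [SimpleGraph.mem_edgeSet] at he
        match x, y with
        | Sum.inl u, Sum.inl v =>
          have hadj := (hHG u v).1 he
          obtain ⟨⟨k, hk⟩, hlt⟩ := hodd u v hadj
          simp only [gE, kf, Sym2.lift_mk, Set.mem_setOf_eq]
          exact ⟨⟨k + m, by omega⟩, by omega⟩
        | Sum.inl u, Sum.inr l =>
          have hl : (l : ℕ) < m := l.isLt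
          simp only [gE, kf, Sym2.lift_mk, Set.mem_setOf_eq]
          exact ⟨⟨l, by omega⟩, by omega⟩
        | Sum.inr l, Sum.inl u =>
          have hl : (l : ℕ) < m := l.isLt
          simp only [gE, kf, Sym2.lift_mk, Set.mem_setOf_eq]
          exact ⟨⟨l, by omega⟩, by omega⟩
        | Sum.inr l, Sum.inr l' => exact absurd he (hLL l l')
    · rintro n ⟨⟨k, hk⟩, hn⟩
      by_cases h : n < 2 * m
      · have hkm : k < m := by omega
        refine ⟨s(Sum.inr (⟨k, hkm⟩ : Fin m), Sum.inl (uof ⟨k, hkm⟩)),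
          H.mem_edgeSet.mpr (huof _), ?_⟩
        simp only [gE, kf, Sym2.lift_mk]
        omega
      · have hmem : n - 2 * m ∈ fE '' G.edgeSet := by
          rw [hfE]
          exact ⟨⟨k - m, by omega⟩, by omega⟩
        obtain ⟨e, he, hfe⟩ := hmem
        induction e using Sym2.ind with
        | _ a b =>
          rw [SimpleGraph.mem_edgeSet] at he
          refine ⟨s(Sum.inl a, Sum.inl b), H.mem_edgeSet.mpr ((hHG a b).2 he), ?_⟩
          simp only [gE, kf, Sym2.lift_mk]
          omega
  · rintro (u | l) (v | l') hadj
    · have h1 := hf u v ((hHG u v).1 hadj)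
      simp only [gV, gE, kf, Sym2.lift_mk, Sum.elim_inl]
      omega
    · have hu : u = uof l' := huniq l' u hadj.symm
      have h1 := hμ u
      have h2 : (l' : ℕ) < m := l'.isLt
      subst hu
      simp only [gV, gE, kf, Sym2.lift_mk, Sum.elim_inl, Sum.elim_inr]
      omega
    · have hv : v = uof l := huniq l v hadj
      have h1 := hμ v
      have h2 : (l : ℕ) < m := l.isLt
      subst hv
      simp only [gV, gE, kf, Sym2.lift_mk, Sum.elim_inl, Sum.elim_inr]
      omega
    · exact absurd hadj (hLL l l')
end
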